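/- Banach fixed-point argument for existence/uniqueness: let X be a Banach space, K ≥ 1, q ∈ (1/2,1], ψ ∈ C¹([0,T]) strictly increasing, f : [0,T] × X → X continuous with ‖f(t,x) − f(t,y)‖ ≤ N₀‖x−y‖, and suppose K N₀ (ψ(T)−ψ(0))^{2q} / Γ(2q+1) < 1. Then the map Ψ on C([0,T];X) defined by (ΨΘ)(t) = C_q^ψ(t,0)Θ₀ + R_q^ψ(t,0)Θ₁ + ∫₀ᵗ (ψ(t)−ψ(s))^{q−1} P_q^ψ(t,s) f(s,Θ(s)) ψ′(s) ds has a unique fixed point in C([0,T];X), where the operator families satisfy ‖P_q^ψ(t,s)‖ ≤ K(ψ(t)−ψ(s))^q/Γ(2q). -/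

import Mathlib

/-!
The right-hand side defines a map `Ψ` on `C([0, T]; X)`. Its kernel `(ψ t - ψ s) ^ (q - 1)` is
singular, but the bound on `P(t, s)` makes the integrand of order `(ψ t - ψ s) ^ (2q - 1)` with
`2q - 1 > 0`, so it extends continuously to the closed triangle `0 ≤ s ≤ t ≤ T` (strong continuity
of `P` is upgraded to joint continuity by Banach–Steinhaus) and `Ψ` preserves continuity. The same
bound and `∫₀ᵗ (ψ t - ψ s) ^ (2q - 1) ψ' s ds = (ψ t - ψ 0) ^ (2q) / (2q)` make `Ψ` Lipschitz with
constant `K N₀ (ψ T - ψ 0) ^ (2q) / Γ(2q + 1) < 1`, and Banach's fixed-point theorem applies.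
-/

open MeasureTheory Set Filter Topology Function

theorem continuous_uncurry_of_continuous_apply {α 𝕜 E F : Type*} [TopologicalSpace α]
    [WeaklyLocallyCompactSpace α] [NontriviallyNormedField 𝕜] [NormedAddCommGroup E]
    [NormedSpace 𝕜 E] [CompleteSpace E] [NormedAddCommGroup F] [NormedSpace 𝕜 F]
    {P : α → E →L[𝕜] F} (hP : ∀ x, Continuous fun a => P a x) :
    Continuous fun z : α × E => P z.1 z.2 := by
  refine continuous_iff_continuousAt.2 fun ⟨a₀, x₀⟩ => ?_
  obtain ⟨U, hUc, hU⟩ := exists_compact_mem_nhds a₀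
  -- Banach–Steinhaus: `P` is uniformly bounded on a compact neighbourhood of `a₀`
  obtain ⟨C, hC⟩ : ∃ C, ∀ a : U, ‖P a‖ ≤ C := banach_steinhaus fun x => by
    obtain ⟨C, hC⟩ := hUc.exists_bound_of_continuousOn (hP x).norm.continuousOn
    exact ⟨C, fun a => by simpa using hC a a.2⟩
  have hsmall : Tendsto (fun z : α × E => P z.1 (z.2 - x₀)) (𝓝 (a₀, x₀)) (𝓝 0) := by
    have hdist : Continuous fun z : α × E => C * ‖z.2 - x₀‖ := by fun_prop
    refine squeeze_zero_norm' ?_ (hdist.tendsto' (a₀, x₀) 0 (by simp))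
    filter_upwards [continuous_fst.continuousAt.preimage_mem_nhds hU] with z hz
    exact (P z.1).le_of_opNorm_le_of_le (hC ⟨z.1, hz⟩) le_rfl
  have hsplit : (fun z : α × E => P z.1 z.2) = fun z => P z.1 (z.2 - x₀) + P z.1 x₀ := by
    ext z; simp
  rw [hsplit, ContinuousAt]
  simpa using hsmall.add (((hP x₀).comp continuous_fst).tendsto (a₀, x₀))

theorem ContinuousOn.rpow_smul_of_norm_le {Y E : Type*} [TopologicalSpace Y]
    [NormedAddCommGroup E] [NormedSpace ℝ E] {S : Set Y} {D B : Y → ℝ} {F : Y → E} {α β : ℝ}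
    (hD : ContinuousOn D S) (hD0 : ∀ p ∈ S, 0 ≤ D p) (hF : ContinuousOn F S)
    (hB : ContinuousOn B S) (hFB : ∀ p ∈ S, ‖F p‖ ≤ B p * D p ^ β) (hαβ : 0 < α + β) :
    ContinuousOn (fun p => D p ^ α • F p) S := by
  have hbound : ∀ p ∈ S, ‖D p ^ α • F p‖ ≤ B p * D p ^ (α + β) := fun p hp => by
    rw [norm_smul, Real.norm_of_nonneg (Real.rpow_nonneg (hD0 p hp) _),
      Real.rpow_add' (hD0 p hp) hαβ.ne']
    calc D p ^ α * ‖F p‖ ≤ D p ^ α * (B p * D p ^ β) := by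
          gcongr
          exacts [Real.rpow_nonneg (hD0 p hp) _, hFB p hp]
      _ = B p * (D p ^ α * D p ^ β) := by ring
  intro p hp
  rcases (hD0 p hp).eq_or_lt with hzero | hpos
  · -- where `D` vanishes the singular factor is dominated by `D ^ (α + β) → 0`
    have hlim : Tendsto (fun p => B p * D p ^ (α + β)) (𝓝[S] p) (𝓝 0) := by
      simpa [← hzero, Real.zero_rpow hαβ.ne'] using
        (hB p hp).tendsto.mul ((hD p hp).rpow_const (Or.inr hαβ.le)).tendsto
    have hval : D p ^ α • F p = 0 := norm_le_zero_iff.1 <| (hbound p hp).trans <| by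
      rw [← hzero, Real.zero_rpow hαβ.ne', mul_zero]
    rw [ContinuousWithinAt, hval]
    exact squeeze_zero_norm' (eventually_nhdsWithin_of_forall hbound) hlim
  · exact ((hD p hp).rpow_const (Or.inl hpos.ne')).smul (hF p hp)

theorem intervalIntegrable_rpow_sub_mul {ψ ψ' : ℝ → ℝ} {a t r : ℝ}
    (hψ : ContinuousOn ψ (uIcc a t)) (hψ' : ContinuousOn ψ' (uIcc a t)) (hr : 0 ≤ r) :
    IntervalIntegrable (fun s => (ψ t - ψ s) ^ r * ψ' s) volume a t :=
  ((continuousOn_const.sub hψ).rpow_const fun _ _ => Or.inr hr).mul hψ' |>.intervalIntegrable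

theorem integral_rpow_sub_mul_deriv {ψ ψ' : ℝ → ℝ} {a t r : ℝ}
    (hψ : ∀ s ∈ uIcc a t, HasDerivAt ψ (ψ' s) s) (hψ' : ContinuousOn ψ' (uIcc a t))
    (hr : 1 ≤ r) :
    ∫ s in a..t, (ψ t - ψ s) ^ (r - 1) * ψ' s = (ψ t - ψ a) ^ r / r := by
  have hr0 : r ≠ 0 := by linarith
  have hderiv : ∀ s ∈ uIcc a t,
      HasDerivAt (fun s => -(ψ t - ψ s) ^ r / r) ((ψ t - ψ s) ^ (r - 1) * ψ' s) s := by
    intro s hs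
    have h := ((Real.hasDerivAt_rpow_const (Or.inr hr)).comp s
      ((hψ s hs).const_sub (ψ t))).neg.div_const r
    exact h.congr_deriv (by field_simp)
  have hψc : ContinuousOn ψ (uIcc a t) := fun s hs => (hψ s hs).continuousAt.continuousWithinAt
  rw [intervalIntegral.integral_eq_sub_of_hasDerivAt hderiv
    (intervalIntegrable_rpow_sub_mul hψc hψ' (by linarith)), sub_self, Real.zero_rpow hr0]
  ring

def lowerTriangle (a b : ℝ) : Set (ℝ × ℝ) := {p | a ≤ p.2 ∧ p.2 ≤ p.1 ∧ p.1 ≤ b}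

section LowerTriangle

variable {E : Type*} [NormedAddCommGroup E] {a b : ℝ} {G : ℝ → ℝ → E}

theorem intervalIntegrable_of_continuousOn_lowerTriangle
    (hG : ContinuousOn (uncurry G) (lowerTriangle a b)) {t : ℝ} (ht : t ∈ Icc a b) :
    IntervalIntegrable (G t) volume a t := by
  refine ContinuousOn.intervalIntegrable ?_
  rw [uIcc_of_le ht.1]
  exact hG.comp (continuousOn_const.prodMk continuousOn_id)
    fun s hs => ⟨hs.1, hs.2, ht.2⟩

theorem continuousOn_intervalIntegral_of_continuousOn_lowerTriangle [NormedSpace ℝ E]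
    (hab : a ≤ b) (hG : ContinuousOn (uncurry G) (lowerTriangle a b)) :
    ContinuousOn (fun t => ∫ s in a..t, G t s) (Icc a b) := by
  -- extend `G` continuously to the plane through a retraction onto the triangle
  let π : ℝ → ℝ := fun x => projIcc a b hab x
  let r : ℝ × ℝ → ℝ × ℝ := fun p => (π p.1, min (π p.2) (π p.1))
  have hr : Continuous r := by fun_prop
  have hrT : ∀ p, r p ∈ lowerTriangle a b := fun p =>
    ⟨le_min (projIcc a b hab p.2).2.1 (projIcc a b hab p.1).2.1, min_le_right _ _,
      (projIcc a b hab p.1).2.2⟩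
  have hprim := intervalIntegral.continuous_parametric_primitive_of_continuous
    (μ := volume) (a₀ := a) (f := fun t s => uncurry G (r (t, s))) (hG.comp_continuous hr hrT)
  refine (hprim.comp (continuous_id.prodMk continuous_id)).continuousOn.congr fun t ht => ?_
  refine intervalIntegral.integral_congr fun s hs => ?_
  rw [uIcc_of_le ht.1] at hs
  have hπt : π t = t := congrArg Subtype.val (projIcc_of_mem hab ht)
  have hπs : π s = s := congrArg Subtype.val (projIcc_of_mem hab ⟨hs.1, hs.2.trans ht.2⟩)
  simp [r, hπt, hπs, hs.2]

end LowerTriangle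

theorem exists_unique_fixedPoint_of_contraction_on {α X : Type*} [TopologicalSpace α]
    [NormedAddCommGroup X] [CompleteSpace X] {s : Set α} (hs : IsCompact s)
    {F : (α → X) → α → X} {k : NNReal} (hk : k < 1)
    (hF : ∀ Θ, ContinuousOn Θ s → ContinuousOn (F Θ) s)
    (hFk : ∀ Θ Φ, ContinuousOn Θ s → ContinuousOn Φ s → ∀ δ, 0 ≤ δ →
      (∀ t ∈ s, ‖Θ t - Φ t‖ ≤ δ) → ∀ t ∈ s, ‖F Θ t - F Φ t‖ ≤ k * δ) :
    ∃ Θ, (ContinuousOn Θ s ∧ ∀ t ∈ s, Θ t = F Θ t) ∧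
      ∀ Φ, (ContinuousOn Φ s ∧ ∀ t ∈ s, Φ t = F Φ t) → ∀ t ∈ s, Φ t = Θ t := by
  have : CompactSpace s := isCompact_iff_compactSpace.1 hs
  let extend : C(s, X) → α → X := fun u => Function.extend Subtype.val u 0
  have hextend : ∀ u, s.domRestrict (extend u) = u := fun u => by
    ext a; exact Subtype.val_injective.extend_apply _ _ a
  have hextend_apply : ∀ u (t : s), extend u t = u t := fun u t => congrFun (hextend u) t
  have hextendc : ∀ u, ContinuousOn (extend u) s := fun u => by
    rw [continuousOn_iff_continuous_domRestrict, hextend]; exact u.continuous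
  let Ψ : C(s, X) → C(s, X) := fun u =>
    ⟨s.domRestrict (F (extend u)), (hF _ (hextendc u)).domRestrict⟩
  have hΨ : ContractingWith k Ψ := by
    refine ⟨hk, LipschitzWith.of_dist_le_mul fun u v => ?_⟩
    refine (ContinuousMap.dist_le (by positivity)).2 fun t => ?_
    rw [dist_eq_norm]
    refine hFk _ _ (hextendc u) (hextendc v) _ dist_nonneg (fun a ha => ?_) t t.2
    have h := ContinuousMap.dist_apply_le_dist (f := u) (g := v) ⟨a, ha⟩
    rwa [← hextend u, ← hextend v, dist_eq_norm] at h
  have : Nonempty C(s, X) := ⟨0⟩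
  obtain ⟨w, hw⟩ : ∃ w, IsFixedPt Ψ w := ⟨_, hΨ.fixedPoint_isFixedPt⟩
  refine ⟨extend w, ⟨hextendc w, fun t ht => ?_⟩, fun Φ ⟨hΦc, hΦ⟩ t ht => ?_⟩
  · exact (hextend_apply w ⟨t, ht⟩).trans (DFunLike.congr_fun hw ⟨t, ht⟩).symm
  let v : C(s, X) := ⟨s.domRestrict Φ, hΦc.domRestrict⟩
  have hv : IsFixedPt Ψ v := by
    ext ⟨t, ht⟩
    have hFv := hFk _ _ (hextendc v) hΦc 0 le_rfl
      (fun t ht => by simp [hextend_apply v ⟨t, ht⟩, v]) t ht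
    rw [mul_zero, norm_le_zero_iff, sub_eq_zero] at hFv
    exact hFv.trans (hΦ t ht).symm
  rw [hextend_apply w ⟨t, ht⟩, ← hΨ.fixedPoint_unique' hv hw]
  rfl

section Volterra

variable {X : Type*} [NormedAddCommGroup X] [NormedSpace ℝ X]
  {a b q C : ℝ} {ψ ψ' : ℝ → ℝ} {P : ℝ → ℝ → X →L[ℝ] X}

noncomputable def volterra (a q : ℝ) (ψ ψ' : ℝ → ℝ) (P : ℝ → ℝ → X →L[ℝ] X) (g : ℝ → X)
    (t : ℝ) : X :=
  ∫ s in a..t, ((ψ t - ψ s) ^ (q - 1) * ψ' s) • P t s (g s)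

theorem continuousOn_volterra_integrand (hq : 1 / 2 < q) (hψ : ContinuousOn ψ (Icc a b))
    (hψm : MonotoneOn ψ (Icc a b)) (hψ' : ContinuousOn ψ' (Icc a b))
    (hP : Continuous fun z : (ℝ × ℝ) × X => P z.1.1 z.1.2 z.2)
    (hPb : ∀ s t, a ≤ s → s ≤ t → t ≤ b → ‖P t s‖ ≤ C * (ψ t - ψ s) ^ q)
    {g : ℝ → X} (hg : ContinuousOn g (Icc a b)) :
    ContinuousOn (uncurry fun t s => ((ψ t - ψ s) ^ (q - 1) * ψ' s) • P t s (g s))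
      (lowerTriangle a b) := by
  have hfst : MapsTo Prod.fst (lowerTriangle a b) (Icc a b) := fun p hp =>
    ⟨hp.1.trans hp.2.1, hp.2.2⟩
  have hsnd : MapsTo Prod.snd (lowerTriangle a b) (Icc a b) := fun p hp =>
    ⟨hp.1, hp.2.1.trans hp.2.2⟩
  have hD : ContinuousOn (fun p : ℝ × ℝ => ψ p.1 - ψ p.2) (lowerTriangle a b) :=
    (hψ.comp continuousOn_fst hfst).sub (hψ.comp continuousOn_snd hsnd)
  have hD0 : ∀ p ∈ lowerTriangle a b, 0 ≤ ψ p.1 - ψ p.2 := fun p hp =>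
    sub_nonneg.2 (hψm (hsnd hp) (hfst hp) hp.2.1)
  have hF : ContinuousOn (fun p : ℝ × ℝ => ψ' p.2 • P p.1 p.2 (g p.2)) (lowerTriangle a b) :=
    (hψ'.comp continuousOn_snd hsnd).smul
      (hP.comp_continuousOn (continuousOn_id.prodMk (hg.comp continuousOn_snd hsnd)))
  have hB : ContinuousOn (fun p : ℝ × ℝ => C * (‖ψ' p.2‖ * ‖g p.2‖)) (lowerTriangle a b) :=
    continuousOn_const.mul ((hψ'.comp continuousOn_snd hsnd).norm.mul
      (hg.comp continuousOn_snd hsnd).norm)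
  have hFB : ∀ p ∈ lowerTriangle a b,
      ‖ψ' p.2 • P p.1 p.2 (g p.2)‖ ≤ C * (‖ψ' p.2‖ * ‖g p.2‖) * (ψ p.1 - ψ p.2) ^ q :=
    fun p hp => by
      rw [norm_smul]
      calc ‖ψ' p.2‖ * ‖P p.1 p.2 (g p.2)‖
          ≤ ‖ψ' p.2‖ * (C * (ψ p.1 - ψ p.2) ^ q * ‖g p.2‖) := by
            gcongr
            exact (P p.1 p.2).le_of_opNorm_le_of_le (hPb _ _ hp.1 hp.2.1 hp.2.2) le_rfl
        _ = C * (‖ψ' p.2‖ * ‖g p.2‖) * (ψ p.1 - ψ p.2) ^ q := by ring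
  refine (hD.rpow_smul_of_norm_le hD0 hF hB hFB (by linarith : 0 < q - 1 + q)).congr
    fun _ _ => mul_smul _ _ _

theorem continuousOn_volterra (hab : a ≤ b) (hq : 1 / 2 < q) (hψ : ContinuousOn ψ (Icc a b))
    (hψm : MonotoneOn ψ (Icc a b)) (hψ' : ContinuousOn ψ' (Icc a b))
    (hP : Continuous fun z : (ℝ × ℝ) × X => P z.1.1 z.1.2 z.2)
    (hPb : ∀ s t, a ≤ s → s ≤ t → t ≤ b → ‖P t s‖ ≤ C * (ψ t - ψ s) ^ q)
    {g : ℝ → X} (hg : ContinuousOn g (Icc a b)) :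
    ContinuousOn (volterra a q ψ ψ' P g) (Icc a b) :=
  continuousOn_intervalIntegral_of_continuousOn_lowerTriangle hab
    (continuousOn_volterra_integrand hq hψ hψm hψ' hP hPb hg)

theorem norm_volterra_le (hq : 1 / 2 < q) (hψd : ∀ s ∈ Icc a b, HasDerivAt ψ (ψ' s) s)
    (hψ' : ContinuousOn ψ' (Icc a b)) (hψ'0 : ∀ s ∈ Icc a b, 0 ≤ ψ' s)
    (hψm : MonotoneOn ψ (Icc a b))
    (hPb : ∀ s t, a ≤ s → s ≤ t → t ≤ b → ‖P t s‖ ≤ C * (ψ t - ψ s) ^ q)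
    {g : ℝ → X} {ε : ℝ} (hg : ∀ s ∈ Icc a b, ‖g s‖ ≤ ε) {t : ℝ} (ht : t ∈ Icc a b) :
    ‖volterra a q ψ ψ' P g t‖ ≤ C * ε * ((ψ t - ψ a) ^ (2 * q) / (2 * q)) := by
  have hsub : uIcc a t ⊆ Icc a b := by
    rw [uIcc_of_le ht.1]; exact Icc_subset_Icc_right ht.2
  have hpt : ∀ s ∈ Ioc a t, ‖((ψ t - ψ s) ^ (q - 1) * ψ' s) • P t s (g s)‖ ≤
      C * ε * ((ψ t - ψ s) ^ (2 * q - 1) * ψ' s) := by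
    intro s hs
    have hs' : s ∈ Icc a b := ⟨hs.1.le, hs.2.trans ht.2⟩
    have hD0 : 0 ≤ ψ t - ψ s := sub_nonneg.2 (hψm hs' ht hs.2)
    rw [norm_smul, Real.norm_of_nonneg (mul_nonneg (Real.rpow_nonneg hD0 _) (hψ'0 s hs')),
      show 2 * q - 1 = (q - 1) + q by ring, Real.rpow_add' hD0 (by linarith)]
    calc (ψ t - ψ s) ^ (q - 1) * ψ' s * ‖P t s (g s)‖
        ≤ (ψ t - ψ s) ^ (q - 1) * ψ' s * (C * (ψ t - ψ s) ^ q * ε) := by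
          gcongr
          · exact mul_nonneg (Real.rpow_nonneg hD0 _) (hψ'0 s hs')
          · exact (P t s).le_of_opNorm_le_of_le (hPb s t hs'.1 hs.2 ht.2) (hg s hs')
      _ = C * ε * ((ψ t - ψ s) ^ (q - 1) * (ψ t - ψ s) ^ q * ψ' s) := by ring
  have hψ : ContinuousOn ψ (uIcc a t) := fun s hs =>
    (hψd s (hsub hs)).continuousAt.continuousWithinAt
  calc ‖volterra a q ψ ψ' P g t‖
      ≤ ∫ s in a..t, C * ε * ((ψ t - ψ s) ^ (2 * q - 1) * ψ' s) :=
        intervalIntegral.norm_integral_le_of_norm_le ht.1 (ae_of_all _ hpt)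
          ((intervalIntegrable_rpow_sub_mul hψ (hψ'.mono hsub) (by linarith)).const_mul _)
    _ = C * ε * ((ψ t - ψ a) ^ (2 * q) / (2 * q)) := by
        rw [intervalIntegral.integral_const_mul, integral_rpow_sub_mul_deriv
          (fun s hs => hψd s (hsub hs)) (hψ'.mono hsub) (by linarith)]

theorem norm_volterra_sub_le (hq : 1 / 2 < q) (hψd : ∀ s ∈ Icc a b, HasDerivAt ψ (ψ' s) s)
    (hψ' : ContinuousOn ψ' (Icc a b)) (hψ'0 : ∀ s ∈ Icc a b, 0 ≤ ψ' s)
    (hψm : MonotoneOn ψ (Icc a b)) (hP : Continuous fun z : (ℝ × ℝ) × X => P z.1.1 z.1.2 z.2)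
    (hPb : ∀ s t, a ≤ s → s ≤ t → t ≤ b → ‖P t s‖ ≤ C * (ψ t - ψ s) ^ q)
    {g₁ g₂ : ℝ → X} (hg₁ : ContinuousOn g₁ (Icc a b)) (hg₂ : ContinuousOn g₂ (Icc a b))
    {ε : ℝ} (hg : ∀ s ∈ Icc a b, ‖g₁ s - g₂ s‖ ≤ ε) {t : ℝ} (ht : t ∈ Icc a b) :
    ‖volterra a q ψ ψ' P g₁ t - volterra a q ψ ψ' P g₂ t‖ ≤
      C * ε * ((ψ t - ψ a) ^ (2 * q) / (2 * q)) := by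
  have hψ : ContinuousOn ψ (Icc a b) := fun s hs => (hψd s hs).continuousAt.continuousWithinAt
  have hint : ∀ g : ℝ → X, ContinuousOn g (Icc a b) → IntervalIntegrable
      (fun s => ((ψ t - ψ s) ^ (q - 1) * ψ' s) • P t s (g s)) volume a t := fun g hg =>
    intervalIntegrable_of_continuousOn_lowerTriangle
      (continuousOn_volterra_integrand hq hψ hψm hψ' hP hPb hg) ht
  have hsub : volterra a q ψ ψ' P g₁ t - volterra a q ψ ψ' P g₂ t =
      volterra a q ψ ψ' P (g₁ - g₂) t := by
    simp only [volterra, ← intervalIntegral.integral_sub (hint g₁ hg₁) (hint g₂ hg₂),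
      Pi.sub_apply, map_sub, smul_sub]
  rw [hsub]
  exact norm_volterra_le hq hψd hψ' hψ'0 hψm hPb hg ht

end Volterra

theorem mild_solution_exists_unique_general
    {X : Type*} [NormedAddCommGroup X] [NormedSpace ℝ X] [CompleteSpace X]
    (T K q N₀ : ℝ) (hT : 0 < T) (hK : 1 ≤ K) (hq : q ∈ Ioc (1/2 : ℝ) 1) (hN : 0 < N₀)
    (ψ ψ' : ℝ → ℝ)
    (hψd : ∀ t ∈ Icc 0 T, HasDerivAt ψ (ψ' t) t)
    (hψ'c : ContinuousOn ψ' (Icc 0 T))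
    (hψ'pos : ∀ t ∈ Icc 0 T, 0 < ψ' t)
    (hmono : StrictMonoOn ψ (Icc 0 T))
    (f : ℝ → X → X)
    (hfc : Continuous fun p : ℝ × X => f p.1 p.2)
    (hlip : ∀ t : ℝ, ∀ x y : X, ‖f t x - f t y‖ ≤ N₀ * ‖x - y‖)
    (Cq Rq : ℝ → X →L[ℝ] X) (P : ℝ → ℝ → X →L[ℝ] X)
    (hCqc : ∀ x : X, ContinuousOn (fun t => Cq t x) (Icc 0 T))
    (hRqc : ∀ x : X, ContinuousOn (fun t => Rq t x) (Icc 0 T))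
    (hPc : ∀ x : X, Continuous fun p : ℝ × ℝ => P p.1 p.2 x)
    (hPb : ∀ s t : ℝ, 0 ≤ s → s ≤ t → t ≤ T →
      ‖P t s‖ ≤ K * (ψ t - ψ s) ^ q / Real.Gamma (2 * q))
    (hsmall : K * N₀ * (ψ T - ψ 0) ^ (2 * q) / Real.Gamma (2 * q + 1) < 1)
    (Θ₀ Θ₁ : X) :
    ∃ Θ : ℝ → X,
      (ContinuousOn Θ (Icc 0 T) ∧ ∀ t ∈ Icc 0 T,
        Θ t = Cq t Θ₀ + Rq t Θ₁ +
          ∫ s in (0:ℝ)..t, ((ψ t - ψ s) ^ (q - 1) * ψ' s) • P t s (f s (Θ s))) ∧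
      ∀ Φ : ℝ → X,
        (ContinuousOn Φ (Icc 0 T) ∧ ∀ t ∈ Icc 0 T,
          Φ t = Cq t Θ₀ + Rq t Θ₁ +
            ∫ s in (0:ℝ)..t, ((ψ t - ψ s) ^ (q - 1) * ψ' s) • P t s (f s (Φ s))) →
        ∀ t ∈ Icc 0 T, Φ t = Θ t := by
  have hq₁ : 1 / 2 < q := hq.1
  have hψm := hmono.monotoneOn
  have hP := continuous_uncurry_of_continuous_apply (P := uncurry P) fun x => hPc x
  have hPb' : ∀ s t, 0 ≤ s → s ≤ t → t ≤ T →
      ‖P t s‖ ≤ K / Real.Gamma (2 * q) * (ψ t - ψ s) ^ q := fun s t h₁ h₂ h₃ =>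
    (hPb s t h₁ h₂ h₃).trans_eq (mul_div_right_comm _ _ _)
  have hfΘ : ∀ Θ : ℝ → X, ContinuousOn Θ (Icc 0 T) →
      ContinuousOn (fun s => f s (Θ s)) (Icc 0 T) := fun Θ hΘ =>
    hfc.comp_continuousOn (continuousOn_id.prodMk hΘ)
  refine exists_unique_fixedPoint_of_contraction_on isCompact_Icc
    (F := fun Θ t => Cq t Θ₀ + Rq t Θ₁ + volterra 0 q ψ ψ' P (fun s => f s (Θ s)) t)
    (Real.toNNReal_lt_one.2 hsmall) (fun Θ hΘ => ?_) (fun Θ Φ hΘ hΦ δ hδ hΘΦ t ht => ?_)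
  · exact ((hCqc Θ₀).add (hRqc Θ₁)).add (continuousOn_volterra hT.le hq₁
      (fun t ht => (hψd t ht).continuousAt.continuousWithinAt) hψm hψ'c hP hPb' (hfΘ Θ hΘ))
  have hψt : (ψ t - ψ 0) ^ (2 * q) ≤ (ψ T - ψ 0) ^ (2 * q) := by
    gcongr
    · exact sub_nonneg.2 (hψm (left_mem_Icc.2 hT.le) ht ht.1)
    · exact hψm ht (right_mem_Icc.2 hT.le) ht.2
  rw [add_sub_add_left_eq_sub]
  calc _ ≤ K / Real.Gamma (2 * q) * (N₀ * δ) * ((ψ t - ψ 0) ^ (2 * q) / (2 * q)) :=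
        norm_volterra_sub_le hq₁ hψd hψ'c (fun t ht => (hψ'pos t ht).le) hψm hP hPb'
          (hfΘ Θ hΘ) (hfΘ Φ hΦ)
          (fun s hs => (hlip s _ _).trans (mul_le_mul_of_nonneg_left (hΘΦ s hs) hN.le)) ht
    _ = K * N₀ * δ / Real.Gamma (2 * q + 1) * (ψ t - ψ 0) ^ (2 * q) := by
        rw [Real.Gamma_add_one (by linarith)]; ring
    _ ≤ K * N₀ * δ / Real.Gamma (2 * q + 1) * (ψ T - ψ 0) ^ (2 * q) :=
        mul_le_mul_of_nonneg_left hψt <| div_nonneg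
          (mul_nonneg (mul_nonneg (by linarith) hN.le) hδ) (Real.Gamma_pos_of_pos (by linarith)).le
    _ = K * N₀ * (ψ T - ψ 0) ^ (2 * q) / Real.Gamma (2 * q + 1) * δ := by ring
    _ ≤ _ := mul_le_mul_of_nonneg_right (Real.le_coe_toNNReal _) hδ

/-- Existence and uniqueness of a fixed point (mild solution) for the fractional
evolution system via the Banach fixed-point theorem. -/
theorem mild_solution_exists_unique
    {X : Type*} [NormedAddCommGroup X] [NormedSpace ℝ X] [CompleteSpace X]
    (T K q N₀ : ℝ) (hT : 0 < T) (hK : 1 ≤ K) (hq : q ∈ Ioc (1/2 : ℝ) 1) (hN : 0 < N₀)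
    (ψ ψ' : ℝ → ℝ)
    (hψd : ∀ t ∈ Icc 0 T, HasDerivAt ψ (ψ' t) t)
    (hψ'c : ContinuousOn ψ' (Icc 0 T))
    (hψ'pos : ∀ t ∈ Icc 0 T, 0 < ψ' t)
    (hmono : StrictMonoOn ψ (Icc 0 T))
    (f : ℝ → X → X)
    (hfc : Continuous fun p : ℝ × X => f p.1 p.2)
    (hlip : ∀ t : ℝ, ∀ x y : X, ‖f t x - f t y‖ ≤ N₀ * ‖x - y‖)
    (Cq Rq : ℝ → X →L[ℝ] X) (P : ℝ → ℝ → X →L[ℝ] X)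
    (hCqc : ∀ x : X, ContinuousOn (fun t => Cq t x) (Icc 0 T))
    (hRqc : ∀ x : X, ContinuousOn (fun t => Rq t x) (Icc 0 T))
    (hPc : ∀ x : X, Continuous fun p : ℝ × ℝ => P p.1 p.2 x)
    (hCqb : ∀ t ∈ Icc 0 T, ‖Cq t‖ ≤ K)
    (hRqb : ∀ t ∈ Icc 0 T, ‖Rq t‖ ≤ K * (ψ t - ψ 0) / ψ' 0)
    (hPb : ∀ s t : ℝ, 0 ≤ s → s ≤ t → t ≤ T →
      ‖P t s‖ ≤ K * (ψ t - ψ s) ^ q / Real.Gamma (2 * q))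
    (hsmall : K * N₀ * (ψ T - ψ 0) ^ (2 * q) / Real.Gamma (2 * q + 1) < 1)
    (Θ₀ Θ₁ : X) :
    ∃ Θ : ℝ → X,
      (ContinuousOn Θ (Icc 0 T) ∧ ∀ t ∈ Icc 0 T,
        Θ t = Cq t Θ₀ + Rq t Θ₁ +
          ∫ s in (0:ℝ)..t, ((ψ t - ψ s) ^ (q - 1) * ψ' s) • P t s (f s (Θ s))) ∧
      ∀ Φ : ℝ → X,
        (ContinuousOn Φ (Icc 0 T) ∧ ∀ t ∈ Icc 0 T,
          Φ t = Cq t Θ₀ + Rq t Θ₁ +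
            ∫ s in (0:ℝ)..t, ((ψ t - ψ s) ^ (q - 1) * ψ' s) • P t s (f s (Φ s))) →
        ∀ t ∈ Icc 0 T, Φ t = Θ t :=
  mild_solution_exists_unique_general T K q N₀ hT hK hq hN ψ ψ' hψd hψ'c hψ'pos hmono f hfc hlip Cq
    Rq P hCqc hRqc hPc hPb hsmall Θ₀ Θ₁
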